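/- arXiv:1110.6853 — 2 statements merged into one kernel-verified Lean document; each statement's English description precedes it below -/
import Mathlib

section
/- The number of δ-paths of length n starting at a fixed point x ∈ ℤ is at most 2^{n(1 + H(δ) + 3δ)}, where H(δ) = −δ log₂ δ − (1−δ) log₂(1−δ) is the binary entropy and 0 < δ < 1/2. -/
open Finset

/-- `R` is a δ-path of length `n`: the set `M` of times with non-unit increments has
cardinality at most `δn` and the total variation of the non-unit increments is at most `δn`. -/
def IsDeltaPath (δ : ℝ) (n : ℕ) (R : ℕ → ℤ) : Prop :=
  ((((Finset.range n).filter (fun t => |R (t+1) - R t| ≠ 1)).card : ℝ) ≤ δ * n) ∧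
  (((∑ t ∈ (Finset.range n).filter (fun t => |R (t+1) - R t| ≠ 1),
      |R (t+1) - R t| : ℤ) : ℝ) ≤ δ * n)

/-- The binary entropy function. -/
noncomputable def binEntropy (p : ℝ) : ℝ :=
  -p * Real.logb 2 p - (1-p) * Real.logb 2 (1-p)

/-!
A path from `x` is determined by its increment sequence, and an increment sequence by three
pieces of data: the signs of all increments (`2^n` choices), the set `M` of non-unit steps, and the
sizes of the steps in `M`. Since `|M| ≤ δn`, comparing with the `δ`-biased product measure on
subsets of `{0,…,n-1}` bounds the number of choices of `M` by `2^{nH(δ)}`. The sizes, shifted by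
one, are positive integers adding up to at most `2δn`; by stars and bars they form (after one
padding block) a composition of `⌊2δn⌋ + 1`, of which there are at most `2^{2δn}`.
-/

theorem card_finsets_card_le_le_two_rpow_binEntropy {α : Type*} [Fintype α] {p : ℝ} (hp0 : 0 < p)
    (hp : p ≤ 1 / 2) :
    (#{M : Finset α | (#M : ℝ) ≤ p * Fintype.card α} : ℝ)
      ≤ (2 : ℝ) ^ (Fintype.card α * binEntropy p) := by
  set n := Fintype.card α
  have hq0 : 0 < 1 - p := by linarith
  set w : Finset α → ℝ := fun M => p ^ #M * (1 - p) ^ (n - #M)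
  -- Each small set has weight at least `2^{-nH(p)}` under the `p`-biased product measure.
  have hw : ∀ M : Finset α, (#M : ℝ) ≤ p * n → (2 : ℝ) ^ (-(n * binEntropy p)) ≤ w M := by
    intro M hM
    have hMn : #M ≤ n := card_le_univ M
    have hlog : Real.log p ≤ Real.log (1 - p) := Real.log_le_log hp0 (by linarith)
    have hw_exp : w M = Real.exp (#M * Real.log p + ((n : ℝ) - #M) * Real.log (1 - p)) := by
      rw [Real.exp_add, ← Nat.cast_sub hMn, Real.exp_nat_mul, Real.exp_nat_mul,
        Real.exp_log hp0, Real.exp_log hq0]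
    rw [hw_exp, Real.rpow_def_of_pos two_pos, Real.exp_le_exp, binEntropy, Real.logb, Real.logb]
    field_simp
    nlinarith [mul_nonneg (sub_nonneg.2 hM) (sub_nonneg.2 hlog)]
  have htotal : ∑ M ∈ (univ : Finset α).powerset, w M = 1 := by
    simp only [w, n, ← card_univ, sum_pow_mul_eq_add_pow, add_sub_cancel, one_pow]
  have hcard : (#{M : Finset α | (#M : ℝ) ≤ p * n} : ℝ) * (2 : ℝ) ^ (-(n * binEntropy p)) ≤ 1 :=
    calc _ = ∑ M ∈ {M : Finset α | (#M : ℝ) ≤ p * n}, (2 : ℝ) ^ (-(n * binEntropy p)) := by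
          rw [sum_const, nsmul_eq_mul]
      _ ≤ ∑ M ∈ {M : Finset α | (#M : ℝ) ≤ p * n}, w M :=
          sum_le_sum fun M hM => hw M (mem_filter.1 hM).2
      _ ≤ ∑ M ∈ (univ : Finset α).powerset, w M := by
          rw [powerset_univ]
          exact sum_le_sum_of_subset_of_nonneg (filter_subset _ _) fun M _ _ => by positivity
      _ = 1 := htotal
  rwa [Real.rpow_neg zero_le_two, ← div_eq_mul_inv, div_le_one (by positivity)] at hcard

namespace DeltaPath

variable {n : ℕ}

def increments (R : Fin (n + 1) → ℤ) (t : Fin n) : ℤ := R t.succ - R t.castSucc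

theorem eq_of_increments_eq {R R' : Fin (n + 1) → ℤ} (h0 : R 0 = R' 0)
    (h : increments R = increments R') : R = R' := by
  funext i
  induction i using Fin.induction with
  | zero => exact h0
  | succ i ih =>
    have hi := congrFun h i
    simp only [increments] at hi
    omega

def nonUnitSteps (d : Fin n → ℤ) : Finset (Fin n) := {t | |d t| ≠ 1}

theorem isDeltaPath_iff (δ : ℝ) (R : Fin (n + 1) → ℤ) :
    IsDeltaPath δ n (fun t => R ⟨min t n, Nat.lt_succ_of_le (min_le_right t n)⟩) ↔
      (#(nonUnitSteps (increments R)) : ℝ) ≤ δ * n ∧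
      ((∑ t ∈ nonUnitSteps (increments R), |increments R t| : ℤ) : ℝ) ≤ δ * n := by
  have hstep : ∀ t : Fin n, R ⟨min (t + 1) n, Nat.lt_succ_of_le (min_le_right _ n)⟩
      - R ⟨min t n, Nat.lt_succ_of_le (min_le_right _ n)⟩ = increments R t := by
    intro t
    simp only [increments, Fin.succ, Fin.castSucc, Fin.castAdd, Fin.castLE,
      min_eq_left t.isLt.le, min_eq_left (Nat.succ_le_of_lt t.isLt)]
  simp only [IsDeltaPath, card_filter, sum_filter, sum_range, hstep, nonUnitSteps]

def stepSizes (d : Fin n → ℤ) : List ℕ :=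
  ((nonUnitSteps d).sort (· ≤ ·)).map fun t => (d t).natAbs + 1

theorem sum_stepSizes (d : Fin n → ℤ) :
    (stepSizes d).sum = #(nonUnitSteps d) + ∑ t ∈ nonUnitSteps d, (d t).natAbs := by
  rw [stepSizes, ← Multiset.sum_coe, ← Multiset.map_coe, Finset.sort_eq, ← sum_eq_multiset_sum,
    sum_add_distrib, card_eq_sum_ones, add_comm]

-- Stars and bars: closing the list of step sizes with one more block that brings the total
-- to `N + 1` gives a composition of `N + 1` when the step sizes add up to at most `N`.
def encode (N : ℕ) (d : Fin n → ℤ) : (Fin n → Bool) × Finset (Fin n) × List ℕ :=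
  (fun t => decide (0 < d t), nonUnitSteps d, stepSizes d ++ [N + 1 - (stepSizes d).sum])

theorem encode_injective (N : ℕ) : Function.Injective (encode (n := n) N) := by
  intro d d' h
  simp only [encode, Prod.mk.injEq] at h
  obtain ⟨hsign, hM, hsizes⟩ := h
  replace hsizes : stepSizes d = stepSizes d' := by
    simpa only [List.dropLast_concat] using congrArg List.dropLast hsizes
  simp only [stepSizes, hM, List.map_inj_left, mem_sort, add_left_inj] at hsizes
  funext t
  have hpos : 0 < d t ↔ 0 < d' t := by simpa using congrFun hsign t
  have habs : (d t).natAbs = (d' t).natAbs := by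
    by_cases ht : t ∈ nonUnitSteps d'
    · exact hsizes t ht
    · have ht' : t ∉ nonUnitSteps d := hM ▸ ht
      simp only [nonUnitSteps, mem_filter, mem_univ, true_and, not_not, Int.abs_eq_natAbs]
        at ht ht'
      omega
  omega

noncomputable def codes (δ : ℝ) (n : ℕ) : Finset ((Fin n → Bool) × Finset (Fin n) × List ℕ) :=
  univ ×ˢ ({M | (#M : ℝ) ≤ δ * n} : Finset (Finset (Fin n))) ×ˢ
    (univ : Finset (Composition (⌊2 * δ * n⌋₊ + 1))).image Composition.blocks

theorem encode_mem_codes {δ : ℝ} {d : Fin n → ℤ} (hcard : (#(nonUnitSteps d) : ℝ) ≤ δ * n)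
    (hsum : ((∑ t ∈ nonUnitSteps d, |d t| : ℤ) : ℝ) ≤ δ * n) :
    encode ⌊2 * δ * n⌋₊ d ∈ codes δ n := by
  have hN : (stepSizes d).sum ≤ ⌊2 * δ * n⌋₊ := by
    apply Nat.le_floor
    rw [sum_stepSizes]
    push_cast [Nat.cast_natAbs] at hsum ⊢
    linarith
  rw [codes, mem_product, mem_product, mem_filter, mem_image]
  refine ⟨mem_univ _, ⟨mem_univ _, hcard⟩, ⟨_, fun {i} hi => ?_, ?_⟩, mem_univ _, rfl⟩
  · rw [encode, List.mem_append, List.mem_singleton] at hi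
    rcases hi with hi | rfl
    · obtain ⟨t, -, rfl⟩ := List.mem_map.1 hi
      omega
    · omega
  · simp only [encode, List.sum_append, List.sum_singleton]
    omega

theorem card_codes_le {δ : ℝ} (hδ0 : 0 < δ) (hδ : δ ≤ 1 / 2) :
    (#(codes δ n) : ℝ) ≤ (2 : ℝ) ^ (n * (1 + binEntropy δ + 2 * δ)) := by
  have hsmall := card_finsets_card_le_le_two_rpow_binEntropy (α := Fin n) hδ0 hδ
  rw [Fintype.card_fin] at hsmall
  have hsizes : (#((univ : Finset (Composition (⌊2 * δ * n⌋₊ + 1))).image Composition.blocks) : ℝ)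
      ≤ (2 : ℝ) ^ (2 * δ * n) :=
    calc _ ≤ (2 : ℝ) ^ ⌊2 * δ * n⌋₊ := by
          exact_mod_cast card_image_le.trans_eq (by rw [card_univ, composition_card]; rfl)
      _ ≤ (2 : ℝ) ^ (2 * δ * n) := by
          rw [← Real.rpow_natCast]
          exact Real.rpow_le_rpow_of_exponent_le one_le_two (Nat.floor_le (by positivity))
  calc (#(codes δ n) : ℝ)
      = 2 ^ n * (#({M | (#M : ℝ) ≤ δ * n} : Finset (Finset (Fin n))) : ℝ) *
          #((univ : Finset (Composition (⌊2 * δ * n⌋₊ + 1))).image Composition.blocks) := by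
        rw [codes, card_product, card_product, card_univ, Fintype.card_fun, Fintype.card_bool,
          Fintype.card_fin]
        push_cast
        ring
    _ ≤ (2 : ℝ) ^ (n : ℝ) * 2 ^ (n * binEntropy δ) * 2 ^ (2 * δ * n) := by
        rw [Real.rpow_natCast]
        gcongr
    _ = (2 : ℝ) ^ (n * (1 + binEntropy δ + 2 * δ)) := by
        rw [← Real.rpow_add two_pos, ← Real.rpow_add two_pos]
        ring_nf

end DeltaPath

/-- The number of δ-paths of length `n` starting at a fixed point `x` is at most
`2^{n(1 + H(δ) + 3δ)}`. -/
theorem stmt7 (δ : ℝ) (hδ0 : 0 < δ) (hδ : δ < 1/2) (n : ℕ) (x : ℤ) :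
    ((Set.ncard {R : Fin (n+1) → ℤ | R 0 = x ∧
        IsDeltaPath δ n (fun t => R ⟨min t n, Nat.lt_succ_of_le (min_le_right t n)⟩)}) : ℝ)
      ≤ (2:ℝ) ^ ((n:ℝ) * (1 + binEntropy δ + 3*δ)) := by
  open DeltaPath in
  have hencode : Set.ncard {R : Fin (n+1) → ℤ | R 0 = x ∧
      IsDeltaPath δ n (fun t => R ⟨min t n, Nat.lt_succ_of_le (min_le_right t n)⟩)}
        ≤ #(codes δ n) := by
    rw [← Set.ncard_coe_finset]
    refine Set.ncard_le_ncard_of_injOn (encode ⌊2 * δ * n⌋₊ ∘ increments) ?_ ?_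
    · rintro R ⟨-, hR⟩
      obtain ⟨hcard, hsum⟩ := (isDeltaPath_iff δ R).1 hR
      exact encode_mem_codes hcard hsum
    · rintro R ⟨hR0, -⟩ R' ⟨hR0', -⟩ h
      exact eq_of_increments_eq (hR0.trans hR0'.symm) (encode_injective _ h)
  calc _ ≤ (#(DeltaPath.codes δ n) : ℝ) := by exact_mod_cast hencode
    _ ≤ (2 : ℝ) ^ (n * (1 + binEntropy δ + 2 * δ)) := DeltaPath.card_codes_le hδ0 hδ.le
    _ ≤ (2 : ℝ) ^ ((n : ℝ) * (1 + binEntropy δ + 3 * δ)) := by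
        gcongr
        · exact one_le_two
        · linarith
end

section
/- Fix δ ∈ (0, 1/2) such that (2.45 · 2^{1+H(δ)+3δ})/5 < 1. Let ξ be an i.i.d. uniform 5-color scenery and w the word of length n+1 read from an interval K ⊆ [−n,n]. For any fixed x ∈ ℤ whose every δ-path of length n ending at x stays outside [−n,n], the probability that some δ-path R of length n with R(n) = x satisfies ξ∘R = w is at most (2^{1+H(δ)+3δ}/5)^n. Summing over a set X of at most 2·2.45^n such points, P(∃x ∈ X, ∃ δ-path R ending at x with ξ∘R = w) ≤ 2·((2.45·2^{1+H(δ)+3δ})/5)^n, which tends to 0 exponentially. -/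
open MeasureTheory ProbabilityTheory Finset

/-!
A δ-path ending at a given point is determined by its steps. Weighting a unit step by `1` and a
step `j` with `|j| ≠ 1` by `Y 2^{-|j|}`, every admissible step sequence has weight at least
`(Y/2)^{δn}`, while all step sequences together weigh at most `(2 + 4Y)^n`; the choice
`Y = δ / (2(1-δ))` bounds the number of δ-paths ending at a point by `2^{n(1+H(δ)+3δ)}`.
A path that avoids `[-n, n]` reads scenery independent of the word `w`, so it reads `w` with
probability at most `5^{-(n+1)}`. Union bounds over the paths and then over the endpoints
conclude.
-/

open scoped ENNReal

namespace ProbabilityTheory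

variable {Ω α : Type*} [MeasurableSpace Ω] {P : Measure Ω}
  [MeasurableSpace α] [MeasurableSingletonClass α]

lemma IndepFun.measure_setOf_eq_le [IsProbabilityMeasure P] [Countable α] {U V : Ω → α}
    (hUV : IndepFun U V P) (hV : Measurable V) {c : ℝ≥0∞} (hU : ∀ a, P (U ⁻¹' {a}) ≤ c) :
    P {ω | U ω = V ω} ≤ c := by
  have hsplit : {ω | U ω = V ω} = ⋃ a, U ⁻¹' {a} ∩ V ⁻¹' {a} := by
    ext ω; simp [eq_comm]
  calc P {ω | U ω = V ω} ≤ ∑' a, P (U ⁻¹' {a} ∩ V ⁻¹' {a}) := hsplit ▸ measure_iUnion_le _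
    _ = ∑' a, P (U ⁻¹' {a}) * P (V ⁻¹' {a}) := by
        congr! 2 with a
        exact hUV.measure_inter_preimage_eq_mul _ _ (measurableSet_singleton a)
          (measurableSet_singleton a)
    _ ≤ ∑' a, c * P (V ⁻¹' {a}) := by gcongr with a; exact hU a
    _ = c * P (⋃ a, V ⁻¹' {a}) := by
        rw [ENNReal.tsum_mul_left, measure_iUnion _ fun a => hV (measurableSet_singleton a)]
        exact fun a b hab => Disjoint.preimage _ (Set.disjoint_singleton.mpr hab)
    _ ≤ c := mul_le_of_le_one_right' prob_le_one

lemma iIndepFun.measure_forall_eq_le_pow {ι : Type*} [Fintype ι] {ξ : ι → Ω → α}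
    (hindep : iIndepFun ξ P) {p : ℝ≥0∞} (hp : ∀ i a, P {ω | ξ i ω = a} ≤ p) (u : ι → α) :
    P {ω | ∀ i, ξ i ω = u i} ≤ p ^ Fintype.card ι := by
  have hinter : {ω | ∀ i, ξ i ω = u i} = ⋂ i ∈ (univ : Finset ι), ξ i ⁻¹' {u i} := by
    ext ω; simp
  rw [hinter, hindep.measure_inter_preimage_eq_mul _ fun i _ => measurableSet_singleton (u i),
    ← card_univ, ← prod_const]
  exact prod_le_prod' fun i _ => hp i (u i)

lemma iIndepFun.measure_forall_eq_le_pow_of_disjoint [IsProbabilityMeasure P] [Countable α]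
    {ι κ : Type*} [Fintype κ] [DecidableEq ι] {ξ : ι → Ω → α} (hmeas : ∀ i, Measurable (ξ i))
    (hindep : iIndepFun ξ P) {p : ℝ≥0∞} (hp : ∀ i a, P {ω | ξ i ω = a} ≤ p) {a b : κ → ι}
    (ha : a.Injective) (hab : ∀ k l, b k ≠ a l) :
    P {ω | ∀ k, ξ (b k) ω = ξ (a k) ω} ≤ p ^ Fintype.card κ := by
  have hdisj : Disjoint (univ.image a) (univ.image b) := by
    simp only [disjoint_left, mem_image, mem_univ, true_and]
    rintro _ ⟨l, rfl⟩ ⟨k, hk⟩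
    exact hab k l hk
  have hUV : IndepFun (fun ω k => ξ (a k) ω) (fun ω k => ξ (b k) ω) P := by
    have hφ : Measurable fun (u : univ.image a → α) k =>
        u ⟨a k, mem_image_of_mem a (mem_univ k)⟩ := by fun_prop
    have hψ : Measurable fun (v : univ.image b → α) k =>
        v ⟨b k, mem_image_of_mem b (mem_univ k)⟩ := by fun_prop
    exact (hindep.indepFun_finset _ _ hdisj hmeas).comp hφ hψ
  have hevent : {ω | ∀ k, ξ (b k) ω = ξ (a k) ω}
      = {ω | (fun k => ξ (a k) ω) = fun k => ξ (b k) ω} := by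
    simp only [funext_iff, eq_comm]
  rw [hevent]
  refine hUV.measure_setOf_eq_le (by fun_prop) fun u => ?_
  exact (hindep.precomp ha).measure_forall_eq_le_pow (fun k => hp (a k)) u |>.trans_eq'
    (by simp only [Set.preimage, Set.mem_singleton_iff, funext_iff])

end ProbabilityTheory

def steps (n : ℕ) (R : ℕ → ℤ) : Fin n → ℤ := fun i => R (i + 1) - R i

def IsDeltaSteps (δ : ℝ) {n : ℕ} (s : Fin n → ℤ) : Prop :=
  (#{i | |s i| ≠ 1} : ℝ) ≤ δ * n ∧ ((∑ i with |s i| ≠ 1, |s i| : ℤ) : ℝ) ≤ δ * n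

lemma isDeltaPath_iff_isDeltaSteps {δ : ℝ} {n : ℕ} {R : ℕ → ℤ} :
    IsDeltaPath δ n R ↔ IsDeltaSteps δ (steps n R) := by
  rw [IsDeltaPath, IsDeltaSteps, card_filter, card_filter, sum_filter, sum_filter,
    ← Fin.sum_univ_eq_sum_range, ← Fin.sum_univ_eq_sum_range]
  rfl

lemma eq_of_steps_eq {n : ℕ} {R R' : ℕ → ℤ} (hs : steps n R = steps n R') (hn : R n = R' n)
    {t : ℕ} (ht : t ≤ n) : R t = R' t := by
  induction ht using Nat.decreasingInduction with
  | self => exact hn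
  | of_succ k hk ih =>
    have hstep := congrFun hs ⟨k, hk⟩
    simp only [steps] at hstep
    linarith

lemma IsDeltaSteps.abs_le {δ : ℝ} {n : ℕ} {s : Fin n → ℤ} (hδ : δ ≤ 1) (hs : IsDeltaSteps δ s)
    (i : Fin n) : |s i| ≤ n := by
  by_cases hi : |s i| = 1
  · have := i.pos
    omega
  · have hle : |s i| ≤ ∑ i with |s i| ≠ 1, |s i| :=
      single_le_sum (f := fun i => |s i|) (fun _ _ => abs_nonneg _) (by simp [hi])
    have : (|s i| : ℝ) ≤ n := by
      calc (|s i| : ℝ) ≤ ((∑ i with |s i| ≠ 1, |s i| : ℤ) : ℝ) := by exact_mod_cast hle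
        _ ≤ δ * n := hs.2
        _ ≤ n := mul_le_of_le_one_left n.cast_nonneg hδ
    exact_mod_cast this

open Classical in
noncomputable def deltaSteps (δ : ℝ) (n : ℕ) : Finset (Fin n → ℤ) :=
  (Fintype.piFinset fun _ => Icc (-(n : ℤ)) n).filter (IsDeltaSteps δ)

lemma mem_deltaSteps {δ : ℝ} {n : ℕ} {s : Fin n → ℤ} (hδ : δ ≤ 1) :
    s ∈ deltaSteps δ n ↔ IsDeltaSteps δ s := by
  classical
  rw [deltaSteps, mem_filter, Fintype.mem_piFinset]
  simp only [mem_Icc]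
  exact ⟨And.right, fun hs => ⟨fun i => abs_le.mp (hs.abs_le hδ i), hs⟩⟩

lemma card_mul_le_pow_sum {ι β : Type*} [Fintype ι] [DecidableEq ι] {B : Finset β}
    {D : Finset (ι → β)} (hD : D ⊆ Fintype.piFinset fun _ => B) {g : β → ℝ} (hg : ∀ b, 0 ≤ g b)
    {c : ℝ} (hc : ∀ s ∈ D, c ≤ ∏ i, g (s i)) :
    #D * c ≤ (∑ b ∈ B, g b) ^ Fintype.card ι := by
  calc #D * c = ∑ _s ∈ D, c := by rw [sum_const, nsmul_eq_mul]
    _ ≤ ∑ s ∈ D, ∏ i, g (s i) := sum_le_sum hc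
    _ ≤ ∑ s ∈ Fintype.piFinset fun _ => B, ∏ i, g (s i) :=
        sum_le_sum_of_subset_of_nonneg hD fun _ _ _ => prod_nonneg fun _ _ => hg _
    _ = (∑ b ∈ B, g b) ^ Fintype.card ι := by rw [← prod_univ_sum, prod_const, card_univ]

lemma sum_half_pow_le_two (t : Finset ℕ) : ∑ m ∈ t, (1 / 2 : ℝ) ^ m ≤ 2 := by
  calc ∑ m ∈ t, (1 / 2 : ℝ) ^ m ≤ ∑ m ∈ range (t.sup id + 1), (1 / 2 : ℝ) ^ m :=
        sum_le_sum_of_subset_of_nonneg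
          (fun m hm => mem_range.mpr (Nat.lt_succ_of_le (le_sup (f := id) hm)))
          fun _ _ _ => by positivity
    _ ≤ 2 := sum_geometric_two_le _

lemma sum_half_pow_natAbs_le_four (s : Finset ℤ) : ∑ j ∈ s, (1 / 2 : ℝ) ^ j.natAbs ≤ 4 := by
  have hfiber : ∀ m, #{j ∈ s | j.natAbs = m} ≤ 2 := fun m =>
    (card_le_card (t := {(m : ℤ), -(m : ℤ)}) fun j hj => by
      simpa using Int.natAbs_eq_iff.mp (mem_filter.mp hj).2).trans card_le_two
  calc ∑ j ∈ s, (1 / 2 : ℝ) ^ j.natAbs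
      = ∑ m ∈ s.image Int.natAbs, #{j ∈ s | j.natAbs = m} • (1 / 2 : ℝ) ^ m := sum_comp _ _
    _ ≤ ∑ m ∈ s.image Int.natAbs, 2 * (1 / 2 : ℝ) ^ m := by
        gcongr with m
        rw [nsmul_eq_mul]
        gcongr
        exact_mod_cast hfiber m
    _ ≤ 4 := by
        rw [← mul_sum]
        linarith [sum_half_pow_le_two (s.image Int.natAbs)]

noncomputable def stepWeight (Y : ℝ) (j : ℤ) : ℝ := if |j| = 1 then 1 else Y * (1 / 2) ^ j.natAbs

lemma stepWeight_nonneg {Y : ℝ} (hY : 0 ≤ Y) (j : ℤ) : 0 ≤ stepWeight Y j := by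
  unfold stepWeight; split_ifs <;> positivity

lemma sum_stepWeight_le {Y : ℝ} (hY : 0 ≤ Y) (s : Finset ℤ) :
    ∑ j ∈ s, stepWeight Y j ≤ 2 + 4 * Y := by
  have hunit : #{j ∈ s | |j| = 1} ≤ 2 :=
    (card_le_card (t := {1, -1}) fun j hj => by
      simpa using (abs_eq zero_le_one).mp (mem_filter.mp hj).2).trans card_le_two
  calc ∑ j ∈ s, stepWeight Y j
      ≤ ∑ j ∈ s, ((if |j| = 1 then 1 else 0) + Y * (1 / 2 : ℝ) ^ j.natAbs) := by
        gcongr with j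
        unfold stepWeight
        split_ifs <;> simp [hY]
    _ = #{j ∈ s | |j| = 1} + Y * ∑ j ∈ s, (1 / 2 : ℝ) ^ j.natAbs := by
        rw [sum_add_distrib, ← mul_sum, ← sum_filter, sum_const, nsmul_one]
    _ ≤ 2 + Y * 4 := by
        gcongr
        · exact_mod_cast hunit
        · exact sum_half_pow_natAbs_le_four s
    _ = 2 + 4 * Y := by ring

lemma IsDeltaSteps.rpow_le_prod_stepWeight {δ Y : ℝ} {n : ℕ} {s : Fin n → ℤ} (hs : IsDeltaSteps δ s)
    (hY0 : 0 < Y) (hY1 : Y ≤ 1) : ((Y / 2) ^ δ) ^ n ≤ ∏ i, stepWeight Y (s i) := by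
  have hprod : ∏ i, stepWeight Y (s i)
      = Y ^ (#{i | |s i| ≠ 1} : ℝ) * (1 / 2) ^ (((∑ i with |s i| ≠ 1, |s i| : ℤ)) : ℝ) := by
    have hV : (((∑ i with |s i| ≠ 1, |s i| : ℤ)) : ℝ)
        = ((∑ i with |s i| ≠ 1, (s i).natAbs : ℕ) : ℝ) := by
      push_cast
      simp
    rw [hV, Real.rpow_natCast, Real.rpow_natCast, ← prod_pow_eq_pow_sum, ← prod_const,
      ← prod_mul_distrib, prod_filter]
    refine prod_congr rfl fun i _ => ?_
    unfold stepWeight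
    split_ifs <;> simp_all
  have hhalf : (0 : ℝ) < 1 / 2 := by norm_num
  rw [hprod, ← Real.rpow_mul_natCast (by positivity), div_eq_mul_one_div,
    Real.mul_rpow hY0.le hhalf.le]
  exact mul_le_mul (Real.rpow_le_rpow_of_exponent_ge hY0 hY1 hs.1)
    (Real.rpow_le_rpow_of_exponent_ge hhalf (by norm_num) hs.2) (by positivity) (by positivity)

lemma card_deltaSteps_mul_le {δ Y : ℝ} (n : ℕ) (hδ : δ ≤ 1) (hY0 : 0 < Y) (hY1 : Y ≤ 1) :
    #(deltaSteps δ n) * ((Y / 2) ^ δ) ^ n ≤ (2 + 4 * Y) ^ n := by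
  classical
  calc #(deltaSteps δ n) * ((Y / 2) ^ δ) ^ n
      ≤ (∑ j ∈ Icc (-(n : ℤ)) n, stepWeight Y j) ^ Fintype.card (Fin n) :=
        card_mul_le_pow_sum (filter_subset _ _) (stepWeight_nonneg hY0.le)
          fun s hs => ((mem_deltaSteps hδ).mp hs).rpow_le_prod_stepWeight hY0 hY1
    _ ≤ (2 + 4 * Y) ^ n := by
        rw [Fintype.card_fin]
        gcongr
        · exact sum_nonneg fun j _ => stepWeight_nonneg hY0.le j
        · exact sum_stepWeight_le hY0.le _

lemma two_add_four_mul_le_two_rpow_binEntropy {δ : ℝ} (hδ0 : 0 < δ) (hδ1 : δ < 1) :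
    2 + 4 * (δ / (2 * (1 - δ))) ≤
      (2 : ℝ) ^ (1 + binEntropy δ + 3 * δ) * (δ / (2 * (1 - δ)) / 2) ^ δ := by
  have h1δ : 0 < 1 - δ := by linarith
  have hlhs : 2 + 4 * (δ / (2 * (1 - δ))) = 2 / (1 - δ) := by field_simp; ring
  have hY : δ / (2 * (1 - δ)) / 2 = δ / (4 * (1 - δ)) := by field_simp; ring
  rw [hlhs, hY, ← Real.logb_le_logb (b := 2) one_lt_two (by positivity) (by positivity),
    Real.logb_mul (by positivity) (by positivity), Real.logb_rpow two_pos (by norm_num),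
    Real.logb_rpow_eq_mul_logb_of_pos (by positivity), Real.logb_div two_ne_zero h1δ.ne',
    Real.logb_div hδ0.ne' (by positivity), Real.logb_mul four_ne_zero h1δ.ne',
    Real.logb_self_eq_one one_lt_two, binEntropy,
    show (4 : ℝ) = 2 ^ (2 : ℝ) by norm_num, Real.logb_rpow two_pos (by norm_num)]
  linarith

lemma card_deltaSteps_le {δ : ℝ} (hδ0 : 0 < δ) (hδ : δ < 1 / 2) (n : ℕ) :
    (#(deltaSteps δ n) : ℝ) ≤ ((2 : ℝ) ^ (1 + binEntropy δ + 3 * δ)) ^ n := by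
  set Y := δ / (2 * (1 - δ)) with hY
  have hY0 : 0 < Y := div_pos hδ0 (by linarith)
  have hY1 : Y ≤ 1 := by rw [hY, div_le_one (by linarith)]; linarith
  have hc : 0 < ((Y / 2) ^ δ) ^ n := by positivity
  refine le_of_mul_le_mul_right ?_ hc
  calc #(deltaSteps δ n) * ((Y / 2) ^ δ) ^ n ≤ (2 + 4 * Y) ^ n :=
        card_deltaSteps_mul_le n (by linarith) hY0 hY1
    _ ≤ ((2 : ℝ) ^ (1 + binEntropy δ + 3 * δ) * (Y / 2) ^ δ) ^ n := by
        gcongr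
        exact two_add_four_mul_le_two_rpow_binEntropy hδ0 (by linarith)
    _ = ((2 : ℝ) ^ (1 + binEntropy δ + 3 * δ)) ^ n * ((Y / 2) ^ δ) ^ n := mul_pow _ _ _

section Scenery

variable {Ω α : Type*} [MeasurableSpace Ω] {P : Measure Ω} [IsProbabilityMeasure P]
  [MeasurableSpace α] [MeasurableSingletonClass α] [Countable α] {ξ : ℤ → Ω → α}
  {p : ℝ≥0∞} {n : ℕ} {k₁ : ℤ} {S : Set ℤ}

lemma measure_reads_window_le (hmeas : ∀ z, Measurable (ξ z)) (hindep : iIndepFun ξ P)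
    (hp : ∀ z a, P {ω | ξ z ω = a} ≤ p) (hK : ∀ t ≤ n, k₁ + t ∈ S) {R : ℕ → ℤ}
    (hR : ∀ t ≤ n, R t ∉ S) :
    P {ω | ∀ t ≤ n, ξ (R t) ω = ξ (k₁ + t) ω} ≤ p ^ (n + 1) := by
  have hwindow := hindep.measure_forall_eq_le_pow_of_disjoint hmeas hp
    (a := fun i : Fin (n + 1) => k₁ + i) (b := fun i => R i)
    (fun i j h => Fin.ext (by simpa using h))
    fun i j h => hR i (Nat.le_of_lt_succ i.isLt) (h ▸ hK j (Nat.le_of_lt_succ j.isLt))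
  rw [Fintype.card_fin] at hwindow
  refine (measure_mono fun ω hω => ?_).trans hwindow
  exact fun i => hω i (Nat.le_of_lt_succ i.isLt)

lemma measure_exists_deltaPath_reads_window_le {δ : ℝ} (hδ : δ ≤ 1)
    (hmeas : ∀ z, Measurable (ξ z)) (hindep : iIndepFun ξ P) (hp : ∀ z a, P {ω | ξ z ω = a} ≤ p)
    (hK : ∀ t ≤ n, k₁ + t ∈ S) {x : ℤ}
    (hx : ∀ R : ℕ → ℤ, IsDeltaPath δ n R → R n = x → ∀ t ≤ n, R t ∉ S) :
    P {ω | ∃ R : ℕ → ℤ, IsDeltaPath δ n R ∧ R n = x ∧ ∀ t ≤ n, ξ (R t) ω = ξ (k₁ + t) ω}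
      ≤ #(deltaSteps δ n) * p ^ (n + 1) := by
  have hcover : {ω | ∃ R : ℕ → ℤ, IsDeltaPath δ n R ∧ R n = x ∧
      ∀ t ≤ n, ξ (R t) ω = ξ (k₁ + t) ω} ⊆ ⋃ s ∈ deltaSteps δ n,
        {ω | ∃ R : ℕ → ℤ, IsDeltaPath δ n R ∧ R n = x ∧ steps n R = s ∧
          ∀ t ≤ n, ξ (R t) ω = ξ (k₁ + t) ω} := by
    rintro ω ⟨R, hR, hRx, hread⟩
    exact Set.mem_biUnion ((mem_deltaSteps hδ).mpr (isDeltaPath_iff_isDeltaSteps.mp hR))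
      ⟨R, hR, hRx, rfl, hread⟩
  refine (measure_mono hcover).trans <| (measure_biUnion_finset_le _ _).trans ?_
  rw [← nsmul_eq_mul, ← sum_const]
  refine sum_le_sum fun s _ => ?_
  by_cases hs : ∃ R₀ : ℕ → ℤ, IsDeltaPath δ n R₀ ∧ R₀ n = x ∧ steps n R₀ = s
  · obtain ⟨R₀, hR₀, hR₀x, hR₀s⟩ := hs
    refine (measure_mono ?_).trans (measure_reads_window_le hmeas hindep hp hK (hx R₀ hR₀ hR₀x))
    rintro ω ⟨R, -, hRx, hRs, hread⟩ t ht
    rw [eq_of_steps_eq (hR₀s.trans hRs.symm) (hR₀x.trans hRx.symm) ht]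
    exact hread t ht
  · refine (measure_mono_null ?_ measure_empty).trans_le bot_le
    rintro ω ⟨R, hR, hRx, hRs, -⟩
    exact hs ⟨R, hR, hRx, hRs⟩

lemma toReal_measure_exists_deltaPath_reads_window_le {δ : ℝ} (hδ0 : 0 < δ) (hδ : δ < 1 / 2)
    (hmeas : ∀ z, Measurable (ξ z)) (hindep : iIndepFun ξ P)
    (hp : ∀ z a, P {ω | ξ z ω = a} ≤ 1 / 5) (hK : ∀ t ≤ n, k₁ + t ∈ S) {x : ℤ}
    (hx : ∀ R : ℕ → ℤ, IsDeltaPath δ n R → R n = x → ∀ t ≤ n, R t ∉ S) :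
    (P {ω | ∃ R : ℕ → ℤ, IsDeltaPath δ n R ∧ R n = x ∧
      ∀ t ≤ n, ξ (R t) ω = ξ (k₁ + t) ω}).toReal
      ≤ ((2 : ℝ) ^ (1 + binEntropy δ + 3 * δ) / 5) ^ n := by
  have hbound := measure_exists_deltaPath_reads_window_le (by linarith) hmeas hindep hp hK hx
  calc _ ≤ #(deltaSteps δ n) * (1 / 5 : ℝ) ^ (n + 1) := by
        simpa using ENNReal.toReal_mono (by finiteness) hbound
    _ ≤ ((2 : ℝ) ^ (1 + binEntropy δ + 3 * δ)) ^ n * (1 / 5) ^ n :=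
        mul_le_mul (card_deltaSteps_le hδ0 hδ n)
          (pow_le_pow_of_le_one (by norm_num) (by norm_num) n.le_succ) (by positivity)
          (by positivity)
    _ = ((2 : ℝ) ^ (1 + binEntropy δ + 3 * δ) / 5) ^ n := by ring

end Scenery

theorem stmt19_general {Ω : Type*} [MeasurableSpace Ω] (P : Measure Ω) [IsProbabilityMeasure P]
    (δ : ℝ) (hδ0 : 0 < δ) (hδhalf : δ < 1/2)
    (ξ : ℤ → Ω → Fin 5)
    (hmeas : ∀ z, Measurable (ξ z))
    (hindep : iIndepFun ξ P)
    (hunif : ∀ z e, P {ω | ξ z ω = e} = 1/5)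
    (n : ℕ) (k₁ k₂ : ℤ) (hk₁ : -(n:ℤ) ≤ k₁) (hk₂ : k₂ ≤ (n:ℤ)) (hlen : k₂ - k₁ = n) :
    (∀ x : ℤ,
      (∀ R : ℕ → ℤ, IsDeltaPath δ n R → R n = x →
        ∀ t ≤ n, R t ∉ Set.Icc (-(n:ℤ)) (n:ℤ)) →
      (P {ω | ∃ R : ℕ → ℤ, IsDeltaPath δ n R ∧ R n = x ∧
          ∀ t ≤ n, ξ (R t) ω = ξ (k₁ + t) ω}).toReal
        ≤ ((2:ℝ) ^ ((1:ℝ) + binEntropy δ + 3*δ) / 5)^n) ∧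
    (∀ X : Finset ℤ, (X.card : ℝ) ≤ 2 * (2.45:ℝ)^n →
      (∀ x ∈ X, ∀ R : ℕ → ℤ, IsDeltaPath δ n R → R n = x →
        ∀ t ≤ n, R t ∉ Set.Icc (-(n:ℤ)) (n:ℤ)) →
      (P {ω | ∃ x ∈ X, ∃ R : ℕ → ℤ, IsDeltaPath δ n R ∧ R n = x ∧
          ∀ t ≤ n, ξ (R t) ω = ξ (k₁ + t) ω}).toReal
        ≤ 2 * ((2.45:ℝ) * (2:ℝ) ^ ((1:ℝ) + binEntropy δ + 3*δ) / 5)^n) := by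
  have hK : ∀ t ≤ n, k₁ + t ∈ Set.Icc (-(n : ℤ)) n := fun t ht => by
    simp only [Set.mem_Icc]; omega
  have hpoint := fun x => toReal_measure_exists_deltaPath_reads_window_le (x := x) hδ0 hδhalf
    hmeas hindep (fun z a => (hunif z a).le) hK
  refine ⟨hpoint, fun X hX hXavoid => ?_⟩
  set ρ : ℝ := (2 : ℝ) ^ (1 + binEntropy δ + 3 * δ) / 5
  calc _ ≤ ∑ x ∈ X, (P {ω | ∃ R : ℕ → ℤ, IsDeltaPath δ n R ∧ R n = x ∧
          ∀ t ≤ n, ξ (R t) ω = ξ (k₁ + t) ω}).toReal := by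
        refine (measureReal_mono ?_ (measure_ne_top P _)).trans (measureReal_biUnion_finset_le X _)
        rintro ω ⟨x, hx, hω⟩
        exact Set.mem_biUnion hx hω
    _ ≤ ∑ x ∈ X, ρ ^ n := sum_le_sum fun x hx => hpoint x (hXavoid x hx)
    _ ≤ 2 * (2.45 : ℝ) ^ n * ρ ^ n := by
        rw [sum_const, nsmul_eq_mul]
        gcongr
    _ = 2 * ((2.45 : ℝ) * (2 : ℝ) ^ (1 + binEntropy δ + 3 * δ) / 5) ^ n := by
        rw [mul_assoc, ← mul_pow, mul_div_assoc]

/-- High probability of `F₀ⁿ`: for an i.i.d. uniform 5-color scenery and word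
`w = ξ|_{[k₁,k₂]}` with `[k₁,k₂] ⊆ [−n,n]`, for any point `x` all of whose δ-paths of
length `n` ending at `x` avoid `[−n,n]`, the probability that some δ-path ending at
`x` generates `w` is at most `(2^{1+H(δ)+3δ}/5)^n`; and for a set `X` of at most
`2·2.45^n` such points, the union-bound probability is at most
`2·((2.45·2^{1+H(δ)+3δ})/5)^n`. -/
theorem stmt19 {Ω : Type*} [MeasurableSpace Ω] (P : Measure Ω) [IsProbabilityMeasure P]
    (δ : ℝ) (hδ0 : 0 < δ) (hδhalf : δ < 1/2)
    (hsmall : (2.45:ℝ) * (2:ℝ) ^ ((1:ℝ) + binEntropy δ + 3*δ) / 5 < 1)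
    (ξ : ℤ → Ω → Fin 5)
    (hmeas : ∀ z, Measurable (ξ z))
    (hindep : iIndepFun ξ P)
    (hunif : ∀ z e, P {ω | ξ z ω = e} = 1/5)
    (n : ℕ) (k₁ k₂ : ℤ) (hk₁ : -(n:ℤ) ≤ k₁) (hk₂ : k₂ ≤ (n:ℤ)) (hlen : k₂ - k₁ = n) :
    (∀ x : ℤ,
      (∀ R : ℕ → ℤ, IsDeltaPath δ n R → R n = x →
        ∀ t ≤ n, R t ∉ Set.Icc (-(n:ℤ)) (n:ℤ)) →
      (P {ω | ∃ R : ℕ → ℤ, IsDeltaPath δ n R ∧ R n = x ∧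
          ∀ t ≤ n, ξ (R t) ω = ξ (k₁ + t) ω}).toReal
        ≤ ((2:ℝ) ^ ((1:ℝ) + binEntropy δ + 3*δ) / 5)^n) ∧
    (∀ X : Finset ℤ, (X.card : ℝ) ≤ 2 * (2.45:ℝ)^n →
      (∀ x ∈ X, ∀ R : ℕ → ℤ, IsDeltaPath δ n R → R n = x →
        ∀ t ≤ n, R t ∉ Set.Icc (-(n:ℤ)) (n:ℤ)) →
      (P {ω | ∃ x ∈ X, ∃ R : ℕ → ℤ, IsDeltaPath δ n R ∧ R n = x ∧
          ∀ t ≤ n, ξ (R t) ω = ξ (k₁ + t) ω}).toReal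
        ≤ 2 * ((2.45:ℝ) * (2:ℝ) ^ ((1:ℝ) + binEntropy δ + 3*δ) / 5)^n) :=
  stmt19_general P δ hδ0 hδhalf ξ hmeas hindep hunif n k₁ k₂ hk₁ hk₂ hlen
end
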